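/- Let H₁ and H₂ be subgroups of SO(3) ⊂ O(3), and let Z₂ᶜ = {I, -I}. Then for any g ∈ O(3), (H₁ × Z₂ᶜ) ∩ g(H₂ × Z₂ᶜ)g⁻¹ = (H₁ ∩ gH₂g⁻¹) × Z₂ᶜ, where H × Z₂ᶜ denotes the subgroup H ∪ (-H) of O(3). Consequently [H₁ ⊕ Z₂ᶜ] ⊚ [H₂ ⊕ Z₂ᶜ] = ([H₁] ⊚ [H₂]) ⊕ Z₂ᶜ as sets of conjugacy classes. -/

import Mathlib

open Matrix
open scoped Real Pointwise

abbrev O3 := Matrix.orthogonalGroup (Fin 3) ℝ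

def SO3 : Subgroup O3 where
  carrier := {A | (A : Matrix (Fin 3) (Fin 3) ℝ).det = 1}
  one_mem' := by simp
  mul_mem' := by
    intro a b ha hb
    simp only [Set.mem_setOf_eq] at *
    rw [Submonoid.coe_mul, Matrix.det_mul, ha, hb, one_mul]
  inv_mem' := by
    intro a ha
    simp only [Set.mem_setOf_eq] at *
    have h : ((a⁻¹ : O3) : Matrix (Fin 3) (Fin 3) ℝ) = star (a : Matrix (Fin 3) (Fin 3) ℝ) := rfl
    rw [h, Matrix.star_eq_conjTranspose, Matrix.det_conjTranspose]; simpa using ha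

def negI : O3 := ⟨-1, by constructor <;> simp⟩

lemma negI_mul_comm (x : O3) : negI * x = x * negI := Subtype.ext <| by
  show (-1 : Matrix (Fin 3) (Fin 3) ℝ) * x = (x : Matrix (Fin 3) (Fin 3) ℝ) * (-1)
  simp

lemma negI_sq : negI * negI = 1 := Subtype.ext <| by
  show (-1 : Matrix (Fin 3) (Fin 3) ℝ) * (-1) = 1
  simp

/-- `-S = {-g : g ∈ S}` -/
def negSet (S : Set O3) : Set O3 := (fun x => negI * x) '' S

def HZ (H : Subgroup O3) : Subgroup O3 where
  carrier := (H : Set O3) ∪ negSet (H : Set O3)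
  one_mem' := Or.inl H.one_mem
  mul_mem' := by
    rintro a b (ha | ⟨a', ha', rfl⟩) (hb | ⟨b', hb', rfl⟩)
    · exact Or.inl (H.mul_mem ha hb)
    · exact Or.inr ⟨a * b', H.mul_mem ha hb', by rw [← mul_assoc, ← negI_mul_comm, mul_assoc]⟩
    · exact Or.inr ⟨a' * b, H.mul_mem ha' hb, by rw [mul_assoc]⟩
    · refine Or.inl ?_
      have h : negI * a' * (negI * b') = a' * b' := by
        rw [negI_mul_comm a', mul_assoc a', ← mul_assoc negI, negI_sq, one_mul]
      rw [h]; exact H.mul_mem ha' hb'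
  inv_mem' := by
    rintro a (ha | ⟨a', ha', rfl⟩)
    · exact Or.inl (H.inv_mem ha)
    · refine Or.inr ⟨a'⁻¹, H.inv_mem ha', ?_⟩
      show negI * a'⁻¹ = (negI * a')⁻¹
      have hinv : negI⁻¹ = negI := by
        rw [eq_comm, eq_inv_iff_mul_eq_one, negI_sq]
      rw [_root_.mul_inv_rev, hinv, ← negI_mul_comm a'⁻¹]

noncomputable def RzM (θ : ℝ) : Matrix (Fin 3) (Fin 3) ℝ :=
  !![Real.cos θ, -Real.sin θ, 0; Real.sin θ, Real.cos θ, 0; 0, 0, 1]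

lemma RzM_mem (θ : ℝ) : RzM θ ∈ Matrix.orthogonalGroup (Fin 3) ℝ := by
  constructor
  · ext i j
    fin_cases i <;> fin_cases j <;>
      simp [RzM, Matrix.mul_apply, Fin.sum_univ_succ, Matrix.one_apply, mul_comm] <;>
      nlinarith [Real.sin_sq_add_cos_sq θ]
  · ext i j
    fin_cases i <;> fin_cases j <;>
      simp [RzM, Matrix.mul_apply, Fin.sum_univ_succ, Matrix.one_apply, mul_comm] <;>
      nlinarith [Real.sin_sq_add_cos_sq θ]

noncomputable def Rz (θ : ℝ) : O3 := ⟨RzM θ, RzM_mem θ⟩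

def e1 : Fin 3 → ℝ := ![1, 0, 0]
def e2 : Fin 3 → ℝ := ![0, 1, 0]
def e3 : Fin 3 → ℝ := ![0, 0, 1]

/-- rotation by `π` about the unit axis `u` (Rodrigues: `2uuᵀ - I`) -/
noncomputable def RpiM (u : Fin 3 → ℝ) : Matrix (Fin 3) (Fin 3) ℝ :=
  (2 : ℝ) • Matrix.vecMulVec u u - 1

lemma RpiM_mem (u : Fin 3 → ℝ) (hu : u ⬝ᵥ u = 1) :
    RpiM u ∈ Matrix.orthogonalGroup (Fin 3) ℝ := by
  have h3 : u 0 * u 0 + u 1 * u 1 + u 2 * u 2 = 1 := by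
    simpa [dotProduct, Fin.sum_univ_three] using hu
  have key : RpiM u * RpiM u = 1 := by
    ext i j
    simp only [RpiM, Matrix.mul_apply, Matrix.sub_apply, Matrix.smul_apply,
      Matrix.vecMulVec_apply, smul_eq_mul, Fin.sum_univ_three]
    fin_cases i <;> fin_cases j <;> simp [Matrix.one_apply] <;>
      first
        | linear_combination (4 * u 0 * u 0) * h3
        | linear_combination (4 * u 1 * u 1) * h3
        | linear_combination (4 * u 2 * u 2) * h3
        | linear_combination (4 * u 0 * u 1) * h3
        | linear_combination (4 * u 0 * u 2) * h3
        | linear_combination (4 * u 1 * u 2) * h3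
  have hsym : star (RpiM u) = RpiM u := by
    rw [Matrix.star_eq_conjTranspose]
    ext i j
    by_cases h : i = j
    · subst h; simp [RpiM, Matrix.conjTranspose_apply, Matrix.vecMulVec_apply]
    · simp [RpiM, Matrix.conjTranspose_apply, Matrix.vecMulVec_apply, Matrix.one_apply, h,
        Ne.symm h]
      ring
  exact ⟨by rw [hsym]; exact key, by rw [hsym]; exact key⟩

noncomputable def Rpi (u : Fin 3 → ℝ) (hu : u ⬝ᵥ u = 1) : O3 := ⟨RpiM u, RpiM_mem u hu⟩

def conjS (g : O3) (H : Subgroup O3) : Subgroup O3 := H.map (MulAut.conj g).toMonoidHom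

def cclass (H : Subgroup O3) : Set (Subgroup O3) := Set.range fun g : O3 => conjS g H

def clips (H K : Subgroup O3) : Set (Set (Subgroup O3)) :=
  Set.range fun g : O3 => cclass (H ⊓ conjS g K)

def conjSet (g : O3) (S : Set O3) : Set O3 := (fun x => g * x * g⁻¹) '' S

lemma e1_unit : e1 ⬝ᵥ e1 = 1 := by norm_num [e1, dotProduct, Fin.sum_univ_succ]
lemma e2_unit : e2 ⬝ᵥ e2 = 1 := by norm_num [e2, dotProduct, Fin.sum_univ_succ]
lemma e3_unit : e3 ⬝ᵥ e3 = 1 := by norm_num [e3, dotProduct, Fin.sum_univ_succ]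

lemma det_negI_mul (x : O3) :
    ((negI * x : O3) : Matrix (Fin 3) (Fin 3) ℝ).det = -((x : O3) : Matrix (Fin 3) (Fin 3) ℝ).det := by
  have : ((negI * x : O3) : Matrix (Fin 3) (Fin 3) ℝ) = -(x : Matrix (Fin 3) (Fin 3) ℝ) := by
    show (-1 : Matrix (Fin 3) (Fin 3) ℝ) * x = _
    simp
  rw [this, Matrix.det_neg]
  norm_num

lemma mem_HZ_iff {H : Subgroup O3} {x : O3} :
    x ∈ HZ H ↔ x ∈ H ∨ ∃ y ∈ H, x = negI * y := by
  constructor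
  · rintro (h | ⟨y, hy, rfl⟩)
    · exact Or.inl h
    · exact Or.inr ⟨y, hy, rfl⟩
  · rintro (h | ⟨y, hy, rfl⟩)
    · exact Or.inl h
    · exact Or.inr ⟨y, hy, rfl⟩

lemma conjS_le_SO3 {H : Subgroup O3} (h : H ≤ SO3) (g : O3) : conjS g H ≤ SO3 := by
  rintro x hx
  rcases Subgroup.mem_map.mp hx with ⟨y, hy, rfl⟩
  show ((g * y * g⁻¹ : O3) : Matrix (Fin 3) (Fin 3) ℝ).det = 1
  have hgy : ((g * y * g⁻¹ : O3) : Matrix (Fin 3) (Fin 3) ℝ)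
      = (g : Matrix (Fin 3) (Fin 3) ℝ) * y * (g⁻¹ : O3) := rfl
  rw [hgy, Matrix.det_mul, Matrix.det_mul]
  have hy1 : ((y : O3) : Matrix (Fin 3) (Fin 3) ℝ).det = 1 := h hy
  have hg : (g : Matrix (Fin 3) (Fin 3) ℝ).det * ((g⁻¹ : O3) : Matrix (Fin 3) (Fin 3) ℝ).det = 1 := by
    have : ((g * g⁻¹ : O3) : Matrix (Fin 3) (Fin 3) ℝ).det = 1 := by simp
    rw [show ((g * g⁻¹ : O3) : Matrix (Fin 3) (Fin 3) ℝ)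
      = (g : Matrix (Fin 3) (Fin 3) ℝ) * (g⁻¹ : O3) from rfl, Matrix.det_mul] at this
    exact this
  calc (g : Matrix (Fin 3) (Fin 3) ℝ).det * ((y : O3) : Matrix (Fin 3) (Fin 3) ℝ).det *
        ((g⁻¹ : O3) : Matrix (Fin 3) (Fin 3) ℝ).det
      = (g : Matrix (Fin 3) (Fin 3) ℝ).det * ((g⁻¹ : O3) : Matrix (Fin 3) (Fin 3) ℝ).det *
        ((y : O3) : Matrix (Fin 3) (Fin 3) ℝ).det := by ring
    _ = 1 := by rw [hg, hy1, one_mul]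

lemma conjS_HZ (g : O3) (H : Subgroup O3) : conjS g (HZ H) = HZ (conjS g H) := by
  ext x
  rw [mem_HZ_iff]
  constructor
  · intro hx
    rcases Subgroup.mem_map.mp hx with ⟨y, hy, rfl⟩
    rcases mem_HZ_iff.mp hy with h | ⟨z, hz, rfl⟩
    · exact Or.inl (Subgroup.mem_map.mpr ⟨y, h, rfl⟩)
    · refine Or.inr ⟨g * z * g⁻¹, Subgroup.mem_map.mpr ⟨z, hz, rfl⟩, ?_⟩
      show g * (negI * z) * g⁻¹ = negI * (g * z * g⁻¹)
      rw [← mul_assoc g negI z, ← negI_mul_comm g]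
      group
  · rintro (h | ⟨y, hy, rfl⟩)
    · rcases Subgroup.mem_map.mp h with ⟨z, hz, rfl⟩
      exact Subgroup.mem_map.mpr ⟨z, Or.inl hz, rfl⟩
    · rcases Subgroup.mem_map.mp hy with ⟨z, hz, rfl⟩
      refine Subgroup.mem_map.mpr ⟨negI * z, Or.inr ⟨z, hz, rfl⟩, ?_⟩
      show g * (negI * z) * g⁻¹ = negI * (g * z * g⁻¹)
      rw [← mul_assoc g negI z, ← negI_mul_comm g]
      group

lemma HZ_inf {A B : Subgroup O3} (hA : A ≤ SO3) (hB : B ≤ SO3) :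
    HZ A ⊓ HZ B = HZ (A ⊓ B) := by
  ext x
  rw [Subgroup.mem_inf, mem_HZ_iff, mem_HZ_iff, mem_HZ_iff]
  constructor
  · rintro ⟨ha | ⟨a, ha, rfl⟩, hb | ⟨b, hb, hxb⟩⟩
    · exact Or.inl ⟨ha, hb⟩
    · exfalso
      have h1 : ((x : O3) : Matrix (Fin 3) (Fin 3) ℝ).det = 1 := hA ha
      rw [hxb, det_negI_mul, hB hb] at h1
      norm_num at h1
    · exfalso
      have h1 : ((negI * a : O3) : Matrix (Fin 3) (Fin 3) ℝ).det = 1 := hB hb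
      rw [det_negI_mul, hA ha] at h1
      norm_num at h1
    · have hab : a = b := mul_left_cancel hxb
      subst hab
      exact Or.inr ⟨a, ⟨ha, hb⟩, rfl⟩
  · rintro (⟨ha, hb⟩ | ⟨y, ⟨hy1, hy2⟩, rfl⟩)
    · exact ⟨Or.inl ha, Or.inl hb⟩
    · exact ⟨Or.inr ⟨y, hy1, rfl⟩, Or.inr ⟨y, hy2, rfl⟩⟩

/-- For subgroups `H₁, H₂ ≤ SO(3)` and any `g ∈ O(3)`,
`(H₁ ⊕ Z₂ᶜ) ∩ g(H₂ ⊕ Z₂ᶜ)g⁻¹ = (H₁ ∩ gH₂g⁻¹) ⊕ Z₂ᶜ`; consequently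
`[H₁ ⊕ Z₂ᶜ] ⊚ [H₂ ⊕ Z₂ᶜ] = ([H₁] ⊚ [H₂]) ⊕ Z₂ᶜ`. -/
theorem clips_typeII_typeII (H₁ H₂ : Subgroup O3) (h₁ : H₁ ≤ SO3) (h₂ : H₂ ≤ SO3) :
    (∀ g : O3, HZ H₁ ⊓ conjS g (HZ H₂) = HZ (H₁ ⊓ conjS g H₂)) ∧
    clips (HZ H₁) (HZ H₂) = Set.range fun g : O3 => cclass (HZ (H₁ ⊓ conjS g H₂)) := by
  have key : ∀ g : O3, HZ H₁ ⊓ conjS g (HZ H₂) = HZ (H₁ ⊓ conjS g H₂) := by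
    intro g
    rw [conjS_HZ, HZ_inf h₁ (conjS_le_SO3 h₂ g)]
  refine ⟨key, ?_⟩
  unfold clips
  ext S
  constructor
  · rintro ⟨g, rfl⟩
    exact ⟨g, by show cclass _ = cclass _; rw [← key g]⟩
  · rintro ⟨g, rfl⟩
    exact ⟨g, by show cclass _ = cclass _; rw [key g]⟩
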